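/- Let n ≥ 2, let J be a skew-symmetric real n × n matrix, and let M = ℝⁿ × ℝⁿ × ℝ. Write (Ky)_i = Σ_j J_{ij} y_j for y ∈ ℝⁿ. Define the operator V_Θ on complex-valued functions on M × M by (V_Θξ)(x,y,r;x',y',r') = exp(2πi·(r'²/2)·Σ_{i,j} J_{ij} y_j (y'_i − y_i))·exp(−2πi·r'·⟨x, y' − y⟩)·ξ(x − r'·Ky, y, r+r'; x' − x + r'·Ky, y' − y, r'). Then V_Θ satisfies the pentagon equation: (V_Θ)₁₂ ∘ (V_Θ)₁₃ ∘ (V_Θ)₂₃ = (V_Θ)₂₃ ∘ (V_Θ)₁₂ as operators on complex-valued functions on M × M × M. -/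

import Mathlib

open scoped BigOperators

noncomputable section

/-- `M = ℝⁿ × ℝⁿ × ℝ`, with coordinates `(x,y,r)`. -/
abbrev M (n : ℕ) : Type := (Fin n → ℝ) × (Fin n → ℝ) × ℝ

/-- `(Ky)_i = Σ_j J_{ij} y_j`. -/
def Kmap {n : ℕ} (J : Matrix (Fin n) (Fin n) ℝ) (y : Fin n → ℝ) : Fin n → ℝ :=
  fun i => ∑ j, J i j * y j

/-- The operator `V_Θ` on functions on `M × M` (quantization of Case (3)):
`(V_Θξ)(x,y,r;x',y',r') = exp(2πi·(r'²/2)·Σ_{i,j} J_{ij} y_j (y'_i − y_i))·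
exp(−2πi·r'·⟨x, y'−y⟩)·ξ(x − r'·Ky, y, r+r'; x'−x+r'·Ky, y'−y, r')`. -/
def VθJ (n : ℕ) (J : Matrix (Fin n) (Fin n) ℝ) (ξ : M n × M n → ℂ) :
    M n × M n → ℂ := fun v =>
  let x := v.1.1; let y := v.1.2.1; let r := v.1.2.2
  let x' := v.2.1; let y' := v.2.2.1; let r' := v.2.2.2
  Complex.exp ((2 * Real.pi * Complex.I) * ((r' ^ 2 / 2 : ℝ) : ℂ)
      * ((∑ i, ∑ j, J i j * y j * (y' i - y i) : ℝ) : ℂ))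
    * Complex.exp (-(2 * Real.pi * Complex.I) * (r' : ℂ)
        * ((∑ i, x i * (y' i - y i) : ℝ) : ℂ))
    * ξ ((x - r' • Kmap J y, y, r + r'),
         (x' - x + r' • Kmap J y, y' - y, r'))

/-- The leg operator `W₁₂` on functions on `M × M × M`. -/
def leg12 {n : ℕ} (W : (M n × M n → ℂ) → (M n × M n → ℂ)) :
    (M n × M n × M n → ℂ) → (M n × M n × M n → ℂ) := fun ξ p =>
  W (fun q => ξ (q.1, q.2, p.2.2)) (p.1, p.2.1)

/-- The leg operator `W₁₃` on functions on `M × M × M`. -/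
def leg13 {n : ℕ} (W : (M n × M n → ℂ) → (M n × M n → ℂ)) :
    (M n × M n × M n → ℂ) → (M n × M n × M n → ℂ) := fun ξ p =>
  W (fun q => ξ (q.1, p.2.1, q.2)) (p.1, p.2.2)

/-- The leg operator `W₂₃` on functions on `M × M × M`. -/
def leg23 {n : ℕ} (W : (M n × M n → ℂ) → (M n × M n → ℂ)) :
    (M n × M n × M n → ℂ) → (M n × M n × M n → ℂ) := fun ξ p =>
  W (fun q => ξ (p.1, q.1, q.2)) (p.2.1, p.2.2)

/-!
`V_Θ` multiplies by a phase `𝐞 (φ v)` after pulling back along a map `T` of `M × M`, and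
composites of such operators are again of this form, with the maps composed and the phases
added along the composite. The pentagon equation therefore splits into the set-theoretic
pentagon for `T` and a cocycle identity for `φ`; both are identities between polynomials in
the bilinear expressions `x ⬝ᵥ y` and `y ⬝ᵥ J *ᵥ y'`.
-/

open Matrix Real
open scoped FourierTransform

section PhaseComposition

variable {X : Type*}

def phaseComp (φ : X → ℝ) (T : X → X) (ξ : X → ℂ) : X → ℂ :=
  fun v => 𝐞 (φ v) * ξ (T v)

theorem phaseComp_comp (φ ψ : X → ℝ) (T S : X → X) :
    phaseComp φ T ∘ phaseComp ψ S = phaseComp (φ + ψ ∘ T) (S ∘ T) := by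
  funext ξ v
  simp only [Function.comp, phaseComp, Pi.add_apply, AddChar.map_add_eq_mul, Circle.coe_mul,
    mul_assoc]

end PhaseComposition

namespace M

variable {n : ℕ}

def pr12 (p : M n × M n × M n) : M n × M n := (p.1, p.2.1)

def pr13 (p : M n × M n × M n) : M n × M n := (p.1, p.2.2)

def pr23 (p : M n × M n × M n) : M n × M n := (p.2.1, p.2.2)

def legMap12 (T : M n × M n → M n × M n) (p : M n × M n × M n) : M n × M n × M n :=
  ((T (pr12 p)).1, (T (pr12 p)).2, p.2.2)

def legMap13 (T : M n × M n → M n × M n) (p : M n × M n × M n) : M n × M n × M n :=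
  ((T (pr13 p)).1, p.2.1, (T (pr13 p)).2)

def legMap23 (T : M n × M n → M n × M n) (p : M n × M n × M n) : M n × M n × M n :=
  (p.1, (T (pr23 p)).1, (T (pr23 p)).2)

end M

section Legs

open M

variable {n : ℕ}

theorem leg12_phaseComp (φ : M n × M n → ℝ) (T : M n × M n → M n × M n) :
    leg12 (phaseComp φ T) = phaseComp (φ ∘ pr12) (legMap12 T) := rfl

theorem leg13_phaseComp (φ : M n × M n → ℝ) (T : M n × M n → M n × M n) :
    leg13 (phaseComp φ T) = phaseComp (φ ∘ pr13) (legMap13 T) := rfl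

theorem leg23_phaseComp (φ : M n × M n → ℝ) (T : M n × M n → M n × M n) :
    leg23 (phaseComp φ T) = phaseComp (φ ∘ pr23) (legMap23 T) := rfl

end Legs

theorem Kmap_eq_mulVec {n : ℕ} (J : Matrix (Fin n) (Fin n) ℝ) : Kmap J = (J *ᵥ ·) := rfl

namespace VθJ

open M

variable {n : ℕ} (J : Matrix (Fin n) (Fin n) ℝ)

def phase : M n × M n → ℝ
  | ((x, y, _), (_, y', r')) => r' ^ 2 / 2 * ((y' - y) ⬝ᵥ J *ᵥ y) - r' * (x ⬝ᵥ (y' - y))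

def shift : M n × M n → M n × M n
  | ((x, y, r), (x', y', r')) =>
    ((x - r' • J *ᵥ y, y, r + r'), (x' - x + r' • J *ᵥ y, y' - y, r'))

theorem eq_phaseComp : VθJ n J = phaseComp (phase J) (shift J) := by
  funext ξ ⟨⟨x, y, r⟩, ⟨x', y', r'⟩⟩
  have hK : ∑ i, ∑ j, J i j * y j * (y' i - y i) = (y' - y) ⬝ᵥ J *ᵥ y := by
    simp only [dotProduct, mulVec, Pi.sub_apply, Finset.mul_sum]
    exact Finset.sum_congr rfl fun i _ => Finset.sum_congr rfl fun j _ => by ring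
  simp only [VθJ, phaseComp, phase, shift, Kmap_eq_mulVec, hK, fourierChar_apply,
    ← Complex.exp_add]
  congr 2
  simp only [dotProduct, Pi.sub_apply]
  push_cast
  ring

theorem shift_pentagon :
    legMap23 (shift J) ∘ legMap13 (shift J) ∘ legMap12 (shift J)
      = legMap12 (shift J) ∘ legMap23 (shift J) := by
  funext ⟨⟨x₁, y₁, r₁⟩, ⟨x₂, y₂, r₂⟩, ⟨x₃, y₃, r₃⟩⟩
  simp only [Function.comp, legMap12, legMap13, legMap23, pr12, pr13, pr23, shift, mulVec_sub,
    Prod.mk.injEq]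
  and_intros <;> first | trivial | module

theorem phase_cocycle (p : M n × M n × M n) :
    phase J (pr12 p) + phase J (pr13 (legMap12 (shift J) p))
        + phase J (pr23 (legMap13 (shift J) (legMap12 (shift J) p)))
      = phase J (pr23 p) + phase J (pr12 (legMap23 (shift J) p)) := by
  obtain ⟨⟨x₁, y₁, r₁⟩, ⟨x₂, y₂, r₂⟩, ⟨x₃, y₃, r₃⟩⟩ := p
  simp only [legMap12, legMap13, legMap23, pr12, pr13, pr23, shift, phase, mulVec_sub,
    sub_dotProduct, dotProduct_sub, add_dotProduct, smul_dotProduct, smul_eq_mul,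
    dotProduct_comm (J *ᵥ y₁)]
  ring

end VθJ

theorem VθJ_pentagon_general (n : ℕ) (J : Matrix (Fin n) (Fin n) ℝ) :
    leg12 (VθJ n J) ∘ leg13 (VθJ n J) ∘ leg23 (VθJ n J)
      = leg23 (VθJ n J) ∘ leg12 (VθJ n J) := by
  simp only [VθJ.eq_phaseComp, leg12_phaseComp, leg13_phaseComp, leg23_phaseComp,
    phaseComp_comp, ← VθJ.shift_pentagon]
  congr 1
  funext p
  simpa only [Pi.add_apply, Function.comp_apply, add_assoc] using VθJ.phase_cocycle J p

/-- For a skew-symmetric `J` (`n ≥ 2`), `V_Θ` satisfies the pentagon equation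
`(V_Θ)₁₂ (V_Θ)₁₃ (V_Θ)₂₃ = (V_Θ)₂₃ (V_Θ)₁₂`. -/
theorem VθJ_pentagon (n : ℕ) (hn : 2 ≤ n) (J : Matrix (Fin n) (Fin n) ℝ)
    (hJ : ∀ i j, J i j = - J j i) :
    leg12 (VθJ n J) ∘ leg13 (VθJ n J) ∘ leg23 (VθJ n J)
      = leg23 (VθJ n J) ∘ leg12 (VθJ n J) :=
  VθJ_pentagon_general n J

end
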